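/- Every finite automaton has chaotic limits: for the dynamical system (X,f) of a finite automaton over nonempty finite sets (A,Q,B) with input function f_A and output function f_B, for every u ∈ X there exists a set W ⊆ X with u ∈ W such that ω(W) with the restriction of f is a chaotic dynamical system. -/

import Mathlib

open Set Function Topology

/-- The ω-limit set of a set `A` under `f`: `ω(A) = ⋂ₙ closure (⋃_{m>n} f^m(A))`. -/
def omegaSet {X : Type*} [TopologicalSpace X] (f : X → X) (A : Set X) : Set X :=
  ⋂ n : ℕ, closure (⋃ m : ℕ, ⋃ _ : n < m, f^[m] '' A)

/-- A dynamical system is chaotic if its periodic points are dense and it is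
topologically transitive. -/
def IsChaotic {X : Type*} [TopologicalSpace X] (f : X → X) : Prop :=
  Dense {x : X | ∃ n : ℕ, 0 < n ∧ f^[n] x = x} ∧
  ∀ U V : Set X, IsOpen U → IsOpen V → U.Nonempty → V.Nonempty →
    ∃ k : ℕ, 0 < k ∧ (f^[k] '' U ∩ V).Nonempty

/-- `f` restricted to the invariant set `S` is a chaotic dynamical system. -/
def ChaoticOn {X : Type*} [TopologicalSpace X] (f : X → X) (S : Set X) : Prop :=
  ∃ h : MapsTo f S S, IsChaotic (MapsTo.restrict f S S h)

/-- A system has chaotic limits if every point belongs to a set whose ω-limit set is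
a chaotic system. -/
def HasChaoticLimits {X : Type*} [TopologicalSpace X] (f : X → X) : Prop :=
  ∀ x : X, ∃ A : Set X, x ∈ A ∧ ChaoticOn f (omegaSet f A)
/-- The discontinuum over `A, Q, B`: two-sided sequences with letters from `A` at
positive coordinates, a letter from `Q` at coordinate `0`, and letters from `B` at
negative coordinates. -/
def Discontinuum (A Q B : Type*) : Type _ :=
  {u : ℤ → A ⊕ Q ⊕ B //
    (∀ i : ℤ, 0 < i → ∃ a : A, u i = Sum.inl a) ∧
    (∃ q : Q, u 0 = Sum.inr (Sum.inl q)) ∧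
    (∀ i : ℤ, i < 0 → ∃ b : B, u i = Sum.inr (Sum.inr b))}

/-- The topology of the discontinuum: the product topology of the discrete topologies,
i.e. the topology of the metric ρ(u,v) = 2^{-inf{i ≥ 0 : uᵢ ≠ vᵢ or u₋ᵢ ≠ v₋ᵢ}}. -/
instance (A Q B : Type*) : TopologicalSpace (Discontinuum A Q B) := by
  letI : TopologicalSpace (A ⊕ Q ⊕ B) := ⊥
  unfold Discontinuum
  infer_instance

/-- The inner state of the automaton, i.e. the coordinate `u 0`. -/
noncomputable def Discontinuum.state {A Q B : Type*} (u : Discontinuum A Q B) : Q :=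
  u.2.2.1.choose

/-- The next input symbol, i.e. the coordinate `u 1`. -/
noncomputable def Discontinuum.input {A Q B : Type*} (u : Discontinuum A Q B) : A :=
  (u.2.1 1 one_pos).choose

/-- The dynamical system of a finite automaton with input function `fA` and output
function `fB`: it reads a symbol from the input tape, changes its state, and writes
a symbol to the output tape. -/
noncomputable def autMap {A Q B : Type*} (fA : Q × A → Q) (fB : Q → B)
    (u : Discontinuum A Q B) : Discontinuum A Q B :=
  ⟨fun i =>
    if i = -1 then Sum.inr (Sum.inr (fB u.state))
    else if i = 0 then Sum.inr (Sum.inl (fA (u.state, u.input)))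
    else u.1 (i + 1), by
      refine ⟨fun i hi => ?_, ?_, fun i hi => ?_⟩
      · beta_reduce
        rw [if_neg (by omega), if_neg (by omega)]
        exact u.2.1 (i + 1) (by omega)
      · exact ⟨fA (u.state, u.input), by beta_reduce; rw [if_neg (by norm_num), if_pos rfl]⟩
      · by_cases h : i = -1
        · exact ⟨fB u.state, by beta_reduce; rw [if_pos h]⟩
        · beta_reduce
          rw [if_neg h, if_neg (by omega)]
          exact u.2.2.2 (i + 1) (by omega)⟩

/-- A dynamical system `g` is a factor of a finite automaton if there are nonempty
finite sets `A, Q, B`, input and output functions `fA, fB`, and a continuous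
surjection `φ` from the corresponding finite automaton onto `(Y, g)` with
`g ∘ φ = φ ∘ f`. -/
def IsFactorOfFiniteAutomaton {Y : Type*} [TopologicalSpace Y] (g : Y → Y) : Prop :=
  ∃ (A Q B : Type) (_ : Fintype A) (_ : Fintype Q) (_ : Fintype B)
    (_ : Nonempty A) (_ : Nonempty Q) (_ : Nonempty B)
    (fA : Q × A → Q) (fB : Q → B) (φ : Discontinuum A Q B → Y),
    Continuous φ ∧ Surjective φ ∧ g ∘ φ = φ ∘ autMap fA fB

/-!
Let `E` be the set of pairs (state, input letter) that occur infinitely often along the orbit of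
`u`, and call `e'` a successor of `e` when `e'` starts in the state that `e` leads to. The
bi-infinite successor sequences in `E` form an irreducible subshift of finite type: once the orbit
only uses edges of `E`, it walks from any edge of `E` to any other. Such a subshift has dense
periodic points (close a window into a cycle) and is transitive (join two windows by a path), and
both properties pass to its continuous image `L` in the discontinuum, on which the automaton acts as
the shift. Finally `L` is compact and invariant, and the orbit of `u` eventually agrees on every
finite window with a point of `L`, so the ω-limit set of `{u} ∪ L` is `L`.
-/

open Filter Relation

section Walks

variable {V : Type*} {R : V → V → Prop} {x y : ℤ → V} {i k l : ℤ}

def IsBiWalk (R : V → V → Prop) (x : ℤ → V) : Prop :=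
  ∀ j, R (x j) (x (j + 1))

def IsPathOn (R : V → V → Prop) (x : ℤ → V) (i k : ℤ) : Prop :=
  ∀ j, i ≤ j → j < k → R (x j) (x (j + 1))

def shiftSeq (x : ℤ → V) : ℤ → V :=
  fun j => x (j + 1)

theorem iterate_shiftSeq (n : ℕ) (x : ℤ → V) : shiftSeq^[n] x = fun j => x (j + n) := by
  induction n generalizing x with
  | zero => simp
  | succ n ih =>
    rw [iterate_succ_apply, ih]
    ext j
    simp only [shiftSeq, Nat.cast_succ, add_assoc]

theorem IsBiWalk.comp_add_const (hx : IsBiWalk R x) (c : ℤ) : IsBiWalk R fun j => x (j + c) :=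
  fun j => by simpa only [add_right_comm j 1 c] using hx (j + c)

theorem IsBiWalk.isPathOn (hx : IsBiWalk R x) (i k : ℤ) : IsPathOn R x i k :=
  fun j _ _ => hx j

theorem image_shiftSeq_setOf_isBiWalk :
    shiftSeq '' {x : ℤ → V | IsBiWalk R x} = {x | IsBiWalk R x} := by
  refine Subset.antisymm (image_subset_iff.2 fun x hx => hx.comp_add_const 1) fun x hx => ?_
  refine ⟨fun j => x (j - 1), hx.comp_add_const (-1), funext fun j => ?_⟩
  simp [shiftSeq]

theorem IsPathOn.piecewise (hx : IsPathOn R x i k) (hy : IsPathOn R y k l) (hxy : x k = y k) :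
    IsPathOn R (fun m => if m ≤ k then x m else y m) i l := by
  intro j hij hjk
  rcases lt_trichotomy j k with h | rfl | h
  · simp only [if_pos h.le, if_pos (show j + 1 ≤ k by omega)]
    exact hx j hij h
  · simp only [le_refl, if_true, if_neg (show ¬ j + 1 ≤ j by omega), hxy]
    exact hy j le_rfl hjk
  · simp only [if_neg (show ¬ j ≤ k by omega), if_neg (show ¬ j + 1 ≤ k by omega)]
    exact hy j h.le hjk

theorem IsPathOn.update_succ {b : V} (hx : IsPathOn R x i k) (h : R (x k) b) :
    IsPathOn R (update x (k + 1) b) i (k + 1) := by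
  intro j hij hjk
  rw [update_of_ne (by omega)]
  rcases eq_or_lt_of_le (Int.lt_add_one_iff.1 hjk) with rfl | hj
  · rwa [update_self]
  · rw [update_of_ne (by omega)]
    exact hx j hij hj

theorem IsPathOn.exists_extend {b : V} (hx : IsPathOn R x i k) (h : TransGen R (x k) b) :
    ∃ ℓ : ℕ, 0 < ℓ ∧
      ∃ y, IsPathOn R y i (k + ℓ) ∧ EqOn y x (Icc i k) ∧ y (k + ℓ) = b := by
  induction h with
  | single h =>
    refine ⟨1, one_pos, _, hx.update_succ h, fun j hj => update_of_ne ?_ _ _, by simp⟩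
    exact ne_of_lt (by linarith [hj.2])
  | @tail _ d _ h ih =>
    obtain ⟨ℓ, -, y, hy, hyx, rfl⟩ := ih
    refine ⟨ℓ + 1, by omega, update y (k + ℓ + 1) d, ?_,
      fun j hj => (update_of_ne (ne_of_lt (by linarith [hj.2])) _ _).trans (hyx hj), ?_⟩
    · simpa [add_assoc] using hy.update_succ h
    · simp [add_assoc]

def periodize (x : ℤ → V) (i : ℤ) (K : ℕ) : ℤ → V :=
  fun m => x (i + (m - i) % K)

theorem periodize_add_period (x : ℤ → V) (i : ℤ) (K : ℕ) (m : ℤ) :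
    periodize x i K (m + K) = periodize x i K m := by
  simp only [periodize]
  rw [← sub_add_eq_add_sub, Int.add_emod_right]

theorem eqOn_periodize (x : ℤ → V) (i : ℤ) (K : ℕ) :
    EqOn (periodize x i K) x (Ico i (i + K)) := fun m ⟨hm₁, hm₂⟩ => by
  simp only [periodize]
  rw [Int.emod_eq_of_lt (by omega) (by omega), add_sub_cancel]

theorem IsPathOn.isBiWalk_periodize {K : ℕ} (hx : IsPathOn R x i (i + K)) (hK : 0 < K)
    (hper : x (i + K) = x i) : IsBiWalk R (periodize x i K) := by
  intro m
  have h0 := Int.emod_nonneg (m - i) (by omega : (K : ℤ) ≠ 0)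
  have h1 := Int.emod_lt_of_pos (m - i) (by omega : (0 : ℤ) < K)
  have hsucc : (m + 1 - i) % K = ((m - i) % K + 1) % K := by
    rw [Int.emod_add_emod, sub_add_eq_add_sub]
  simp only [periodize]
  rw [hsucc]
  rcases (by omega : (m - i) % K + 1 < K ∨ (m - i) % K + 1 = K) with h | h
  · rw [Int.emod_eq_of_lt (by omega) h, ← add_assoc]
    exact hx _ (by omega) (by omega)
  · rw [h, Int.emod_self, add_zero, ← hper]
    have := hx (i + (m - i) % K) (by omega) (by omega)
    rwa [show i + (m - i) % K + 1 = i + K by omega] at this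

theorem IsPathOn.exists_periodic_isBiWalk_eqOn (hR : ∀ a b, TransGen R a b)
    (hx : IsPathOn R x i k) (hik : i ≤ k) :
    ∃ y, ∃ K : ℕ, 0 < K ∧ IsBiWalk R y ∧ shiftSeq^[K] y = y ∧ EqOn y x (Icc i k) := by
  obtain ⟨ℓ, hℓ, z, hz, hzx, hzi⟩ := hx.exists_extend (hR (x k) (x i))
  set K := (k - i).toNat + ℓ
  have hK : i + K = k + ℓ := by omega
  refine ⟨periodize z i K, K, by omega, ?_, ?_, ?_⟩
  · refine (hK ▸ hz).isBiWalk_periodize (by omega) ?_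
    rw [hK, hzi, hzx (left_mem_Icc.2 hik)]
  · rw [iterate_shiftSeq]
    exact funext (periodize_add_period z i K)
  · refine fun m hm => (eqOn_periodize z i K ⟨hm.1, ?_⟩).trans (hzx hm)
    linarith [hm.2]

theorem IsBiWalk.exists_isBiWalk_eqOn_iterate_shiftSeq (hR : ∀ a b, TransGen R a b)
    (hx : IsBiWalk R x) (hy : IsBiWalk R y) (N : ℕ) :
    ∃ z, ∃ k : ℕ, 0 < k ∧ IsBiWalk R z ∧ EqOn z x (Icc (-N) N) ∧
      EqOn (shiftSeq^[k] z) y (Icc (-N) N) := by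
  obtain ⟨ℓ, hℓ, x', hx', hx'x, hx'y⟩ :=
    (hx.isPathOn (-N) N).exists_extend (hR (x N) (y (-N)))
  set k : ℕ := 2 * N + ℓ with hk
  -- follow `x'` up to time `N + ℓ`, where it reaches `y (-N)`, then `y` delayed by `k`
  let w : ℤ → V := fun m => if m ≤ N + ℓ then x' m else y (m - k)
  have hw : IsPathOn R w (-N) (N + ℓ + 2 * N) :=
    hx'.piecewise ((hy.comp_add_const (-k)).isPathOn _ _) (by rw [hx'y]; congr 1; omega)
  obtain ⟨z, -, -, hz, -, hzw⟩ := hw.exists_periodic_isBiWalk_eqOn hR (by omega)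
  refine ⟨z, k, by omega, hz, fun j ⟨hj₁, hj₂⟩ => ?_, fun j ⟨hj₁, hj₂⟩ => ?_⟩
  · rw [hzw ⟨hj₁, by omega⟩]
    simp only [w]
    rw [if_pos (by omega), hx'x ⟨hj₁, hj₂⟩]
  · rw [iterate_shiftSeq]
    show z (j + k) = y j
    rw [hzw ⟨by omega, by omega⟩]
    simp only [w]
    rcases eq_or_lt_of_le (show (N + ℓ : ℤ) ≤ j + k by omega) with h | h
    · rw [if_pos h.ge, ← h, hx'y]
      congr 1
      omega
    · rw [if_neg (not_le.2 h), add_sub_cancel_right]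

end Walks

theorem hasBasis_nhds_eqOn_Icc {W : Type*} [TopologicalSpace W] [DiscreteTopology W]
    (x : ℤ → W) :
    (𝓝 x).HasBasis (fun _ : ℕ => True) fun N => {y | EqOn y x (Icc (-N : ℤ) N)} := by
  refine ⟨fun U => ⟨fun hU => ?_, fun ⟨N, _, hN⟩ => mem_of_superset ?_ hN⟩⟩
  · rw [nhds_pi, Filter.mem_pi'] at hU
    obtain ⟨I, t, ht, hIt⟩ := hU
    refine ⟨I.sup Int.natAbs, trivial, fun y hy => hIt fun j hj => ?_⟩
    have := Finset.le_sup (f := Int.natAbs) hj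
    rw [hy ⟨by omega, by omega⟩]
    exact mem_of_mem_nhds (ht j)
  · have : {y | EqOn y x (Icc (-N : ℤ) N)} = (Icc (-N : ℤ) N).pi fun j => {x j} := by
      ext y
      simp [EqOn, Set.mem_pi]
    rw [this]
    exact set_pi_mem_nhds (finite_Icc _ _) fun j _ => by simp

theorem isClosed_setOf_isBiWalk {V : Type*} [TopologicalSpace V] [DiscreteTopology V]
    (R : V → V → Prop) : IsClosed {x : ℤ → V | IsBiWalk R x} := by
  have : {x : ℤ → V | IsBiWalk R x} =
      ⋂ j, (fun x => (x j, x (j + 1))) ⁻¹' {p | R p.1 p.2} := by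
    ext x
    simp [IsBiWalk]
  rw [this]
  exact isClosed_iInter fun j =>
    (isClosed_discrete _).preimage ((continuous_apply j).prodMk (continuous_apply (j + 1)))

section Chaos

variable {X Y : Type*} [TopologicalSpace X] [TopologicalSpace Y]

theorem chaoticOn_of_forall_mem_nhds {f : X → X} {S : Set X} (hS : MapsTo f S S)
    (hper : ∀ x ∈ S, ∀ U ∈ 𝓝 x, ∃ y ∈ S ∩ U, ∃ n, 0 < n ∧ f^[n] y = y)
    (htrans : ∀ x ∈ S, ∀ y ∈ S, ∀ U ∈ 𝓝 x, ∀ V ∈ 𝓝 y,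
      ∃ z ∈ S ∩ U, ∃ k, 0 < k ∧ f^[k] z ∈ V) :
    ChaoticOn f S := by
  refine ⟨hS, dense_iff_inter_open.2 fun U hU ⟨x, hx⟩ => ?_,
    fun U V hU hV ⟨x, hx⟩ ⟨y, hy⟩ => ?_⟩
  · obtain ⟨O, hO, rfl⟩ := isOpen_induced_iff.1 hU
    obtain ⟨z, ⟨hzS, hzO⟩, n, hn, hz⟩ := hper x x.2 O (hO.mem_nhds hx)
    exact ⟨⟨z, hzS⟩, hzO, n, hn, Subtype.ext (by rw [hS.coe_iterate_restrict]; exact hz)⟩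
  · obtain ⟨O, hO, rfl⟩ := isOpen_induced_iff.1 hU
    obtain ⟨O', hO', rfl⟩ := isOpen_induced_iff.1 hV
    obtain ⟨z, ⟨hzS, hzO⟩, k, hk, hz⟩ :=
      htrans x x.2 y y.2 O (hO.mem_nhds hx) O' (hO'.mem_nhds hy)
    refine ⟨k, hk, _, mem_image_of_mem _ (show ⟨z, hzS⟩ ∈ Subtype.val ⁻¹' O from hzO),
      ?_⟩
    rwa [mem_preimage, hS.coe_iterate_restrict]

theorem IsChaotic.of_semiconj {g : X → X} {f : Y → Y} {φ : X → Y} (hg : IsChaotic g)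
    (hφ : Continuous φ) (hsurj : Surjective φ) (h : Semiconj φ g f) : IsChaotic f := by
  refine ⟨(hsurj.denseRange.dense_image hφ hg.1).mono ?_, fun U V hU hV hUne hVne => ?_⟩
  · rintro _ ⟨x, ⟨n, hn, hx⟩, rfl⟩
    exact ⟨n, hn, by rw [← (h.iterate_right n).eq, hx]⟩
  · obtain ⟨k, hk, _, ⟨x, hx, rfl⟩, hxV⟩ := hg.2 _ _ (hU.preimage hφ) (hV.preimage hφ)
      (hUne.preimage hsurj) (hVne.preimage hsurj)
    exact ⟨k, hk, _, mem_image_of_mem _ hx, (h.iterate_right k).eq x ▸ hxV⟩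

theorem ChaoticOn.image {g : X → X} {f : Y → Y} {S : Set X} {φ : X → Y} (hg : ChaoticOn g S)
    (hφ : ContinuousOn φ S) (h : ∀ x ∈ S, φ (g x) = f (φ x)) : ChaoticOn f (φ '' S) := by
  obtain ⟨hS, hchaos⟩ := hg
  have hmaps : MapsTo f (φ '' S) (φ '' S) := by
    rintro _ ⟨x, hx, rfl⟩
    exact ⟨g x, hS hx, h x hx⟩
  exact ⟨hmaps, hchaos.of_semiconj (hφ.mapsToRestrict (mapsTo_image φ S))
    (surjective_mapsTo_image_restrict φ S) fun x => Subtype.ext (h x x.2)⟩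

end Chaos

theorem omegaSet_insert_of_image_eq {X : Type*} [TopologicalSpace X] {f : X → X} {S : Set X}
    (hS : f '' S = S) (u : X) : omegaSet f (insert u S) = omegaSet f {u} ∪ closure S := by
  have hiter : ∀ m, f^[m] '' S = S := fun m => by
    induction m with
    | zero => simp
    | succ m ih => rw [iterate_succ', image_comp, ih, hS]
  have htail : ∀ n : ℕ, ⋃ m, ⋃ (_ : n < m), f^[m] '' insert u S =
      (⋃ m, ⋃ (_ : n < m), f^[m] '' {u}) ∪ S := by
    intro n
    ext x
    simp only [insert_eq, image_union, hiter, mem_iUnion, mem_union, exists_prop]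
    constructor
    · rintro ⟨m, hm, hx | hx⟩
      exacts [Or.inl ⟨m, hm, hx⟩, Or.inr hx]
    · rintro (⟨m, hm, hx⟩ | hx)
      exacts [⟨m, hm, Or.inl hx⟩, ⟨n + 1, n.lt_succ_self, Or.inr hx⟩]
  simp only [omegaSet, htail, closure_union, iInter_union]

theorem chaoticOn_shiftSeq {V : Type*} [TopologicalSpace V] [DiscreteTopology V]
    {R : V → V → Prop} (hR : ∀ a b, TransGen R a b) :
    ChaoticOn shiftSeq {x : ℤ → V | IsBiWalk R x} := by
  refine chaoticOn_of_forall_mem_nhds (fun x hx => hx.comp_add_const 1) (fun x hx U hU => ?_)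
    fun x hx y hy U hU U' hU' => ?_
  · obtain ⟨N, -, hN⟩ := (hasBasis_nhds_eqOn_Icc x).mem_iff.1 hU
    obtain ⟨z, K, hK, hz, hzK, hzx⟩ :=
      (hx.isPathOn (-N) N).exists_periodic_isBiWalk_eqOn hR (by omega)
    exact ⟨z, ⟨hz, hN hzx⟩, K, hK, hzK⟩
  · obtain ⟨N, -, hN⟩ := (hasBasis_nhds_eqOn_Icc x).mem_iff.1 hU
    obtain ⟨N', -, hN'⟩ := (hasBasis_nhds_eqOn_Icc y).mem_iff.1 hU'
    obtain ⟨z, k, hk, hz, hzx, hzy⟩ := hx.exists_isBiWalk_eqOn_iterate_shiftSeq hR hy (max N N')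
    exact ⟨z, ⟨hz, hN (hzx.mono (Icc_subset_Icc (by omega) (by omega)))⟩, k, hk,
      hN' (hzy.mono (Icc_subset_Icc (by omega) (by omega)))⟩

section Recurrence

variable {α : Type*}

def recurrentValues (f : ℕ → α) : Set α :=
  {a | ∃ᶠ n in atTop, f n = a}

theorem eventually_mem_recurrentValues [Finite α] (f : ℕ → α) :
    ∀ᶠ n in atTop, f n ∈ recurrentValues f := by
  have : ∀ᶠ n in atTop, ∀ a : ↥(recurrentValues f)ᶜ, f n ≠ a :=
    eventually_all.2 fun a => not_frequently.1 a.2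
  exact this.mono fun n hn => by_contra fun h => hn ⟨f n, h⟩ rfl

theorem transGen_on_recurrentValues [Finite α] {R : α → α → Prop} {f : ℕ → α}
    (hf : ∀ n, R (f n) (f (n + 1))) (a b : recurrentValues f) :
    TransGen (R on Subtype.val) a b := by
  obtain ⟨N, hN⟩ := eventually_atTop.1 (eventually_mem_recurrentValues f)
  obtain ⟨n, hna, hn⟩ := (a.2.and_eventually (eventually_ge_atTop N)).exists
  obtain ⟨m, hmb, hm⟩ := (b.2.and_eventually (eventually_gt_atTop n)).exists
  let g : ℕ → recurrentValues f := fun k => ⟨f (N + k), hN _ (Nat.le_add_right N k)⟩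
  have hg := Nat.rel_of_forall_rel_succ_of_lt (TransGen (R on Subtype.val)) (f := g)
    (fun k => TransGen.single (hf (N + k))) (show n - N < m - N by omega)
  have ha : g (n - N) = a := Subtype.ext (by simp [g, Nat.add_sub_cancel' hn, hna])
  have hb : g (m - N) = b :=
    Subtype.ext (by simp [g, Nat.add_sub_cancel' (by omega : N ≤ m), hmb])
  rwa [ha, hb] at hg

end Recurrence

namespace Discontinuum

variable {A Q B : Type*}

@[ext]
theorem ext {u v : Discontinuum A Q B} (h : ∀ i, u.1 i = v.1 i) : u = v :=
  Subtype.ext (funext h)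

theorem val_zero (u : Discontinuum A Q B) : u.1 0 = .inr (.inl u.state) :=
  u.2.2.1.choose_spec

theorem val_one (u : Discontinuum A Q B) : u.1 1 = .inl u.input :=
  (u.2.1 1 one_pos).choose_spec

theorem state_eq_of_val_zero {u : Discontinuum A Q B} {q : Q} (h : u.1 0 = .inr (.inl q)) :
    u.state = q := by
  simpa [val_zero] using h

theorem input_eq_of_val_one {u : Discontinuum A Q B} {a : A} (h : u.1 1 = .inl a) :
    u.input = a := by
  simpa [val_one] using h

instance : T2Space (Discontinuum A Q B) := by
  let _ : TopologicalSpace (A ⊕ Q ⊕ B) := ⊥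
  have : DiscreteTopology (A ⊕ Q ⊕ B) := ⟨rfl⟩
  exact (IsEmbedding.subtypeVal : IsEmbedding (Subtype.val : Discontinuum A Q B → _)).t2Space

theorem hasBasis_nhds (u : Discontinuum A Q B) :
    (𝓝 u).HasBasis (fun _ : ℕ => True) fun N => {v | EqOn v.1 u.1 (Icc (-N : ℤ) N)} := by
  let _ : TopologicalSpace (A ⊕ Q ⊕ B) := ⊥
  have : DiscreteTopology (A ⊕ Q ⊕ B) := ⟨rfl⟩
  have h : IsInducing (Subtype.val : Discontinuum A Q B → _) := IsInducing.subtypeVal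
  have := (hasBasis_nhds_eqOn_Icc u.1).comap (Subtype.val : Discontinuum A Q B → _)
  rwa [← h.nhds_eq_comap u] at this

def ofPath (fB : Q → B) (x : ℤ → Q × A) : Discontinuum A Q B :=
  ⟨fun i => if 0 < i then .inl (x (i - 1)).2
    else if i = 0 then .inr (.inl (x i).1) else .inr (.inr (fB (x i).1)),
    fun _ hi => ⟨_, if_pos hi⟩, ⟨_, (if_neg (lt_irrefl 0)).trans (if_pos rfl)⟩,
    fun _ hi => ⟨_, (if_neg hi.not_gt).trans (if_neg hi.ne)⟩⟩

variable (fB : Q → B)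

theorem ofPath_val_of_pos (x : ℤ → Q × A) {i : ℤ} (hi : 0 < i) :
    (ofPath fB x).1 i = .inl (x (i - 1)).2 :=
  if_pos hi

theorem ofPath_val_zero (x : ℤ → Q × A) : (ofPath fB x).1 0 = .inr (.inl (x 0).1) := by
  simp [ofPath]

theorem ofPath_val_of_neg (x : ℤ → Q × A) {i : ℤ} (hi : i < 0) :
    (ofPath fB x).1 i = .inr (.inr (fB (x i).1)) :=
  (if_neg hi.not_gt).trans (if_neg hi.ne)

theorem state_ofPath (x : ℤ → Q × A) : (ofPath fB x).state = (x 0).1 :=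
  state_eq_of_val_zero (ofPath_val_zero fB x)

theorem input_ofPath (x : ℤ → Q × A) : (ofPath fB x).input = (x 0).2 :=
  input_eq_of_val_one (ofPath_val_of_pos fB x one_pos)

theorem ofPath_shiftSeq_val (x : ℤ → Q × A) {i : ℤ} (h₁ : i ≠ -1) (h₀ : i ≠ 0) :
    (ofPath fB (shiftSeq x)).1 i = (ofPath fB x).1 (i + 1) := by
  rcases lt_or_gt_of_ne h₀ with hi | hi
  · rw [ofPath_val_of_neg fB _ hi, ofPath_val_of_neg fB _ (by omega), shiftSeq]
  · rw [ofPath_val_of_pos fB _ hi, ofPath_val_of_pos fB _ (by omega), shiftSeq, sub_add_cancel,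
      add_sub_cancel_right]

theorem eqOn_ofPath {x y : ℤ → Q × A} {N : ℕ} (h : EqOn x y (Icc (-N : ℤ) N)) :
    EqOn (ofPath fB x).1 (ofPath fB y).1 (Icc (-N : ℤ) N) := by
  intro i hi
  rcases lt_trichotomy i 0 with hi' | rfl | hi'
  · rw [ofPath_val_of_neg fB _ hi', ofPath_val_of_neg fB _ hi', h hi]
  · rw [ofPath_val_zero, ofPath_val_zero, h hi]
  · rw [ofPath_val_of_pos fB _ hi', ofPath_val_of_pos fB _ hi',
      h ⟨by linarith [hi.1], by linarith [hi.2]⟩]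

theorem continuous_ofPath_comp {V : Type*} [TopologicalSpace V] [DiscreteTopology V]
    (c : V → Q × A) : Continuous fun x : ℤ → V => ofPath fB (c ∘ x) := by
  let _ : TopologicalSpace (A ⊕ Q ⊕ B) := ⊥
  have : DiscreteTopology (A ⊕ Q ⊕ B) := ⟨rfl⟩
  have h : IsInducing (Subtype.val : Discontinuum A Q B → _) := IsInducing.subtypeVal
  refine h.continuous_iff.2 (continuous_pi fun i => ?_)
  have hpair : Continuous fun x : ℤ → V => (x (i - 1), x i) :=
    (continuous_apply (i - 1)).prodMk (continuous_apply i)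
  exact (continuous_of_discreteTopology (f := fun p : V × V => (if 0 < i then .inl (c p.1).2
    else if i = 0 then .inr (.inl (c p.2).1) else .inr (.inr (fB (c p.2).1)) : A ⊕ Q ⊕ B))).comp
    hpair

end Discontinuum

section Automaton

open Discontinuum

variable {A Q B : Type*} (fA : Q × A → Q) (fB : Q → B)

def IsNextEdge (e e' : Q × A) : Prop :=
  fA e = e'.1

theorem autMap_val_neg_one (u : Discontinuum A Q B) :
    (autMap fA fB u).1 (-1) = .inr (.inr (fB u.state)) := by
  simp [autMap]

theorem autMap_val_of_ne (u : Discontinuum A Q B) {i : ℤ} (h₁ : i ≠ -1) (h₀ : i ≠ 0) :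
    (autMap fA fB u).1 i = u.1 (i + 1) := by
  simp [autMap, h₁, h₀]

theorem state_autMap (u : Discontinuum A Q B) :
    (autMap fA fB u).state = fA (u.state, u.input) :=
  state_eq_of_val_zero (by simp [autMap])

theorem autMap_ofPath {x : ℤ → Q × A} (hx : IsNextEdge fA (x 0) (x 1)) :
    autMap fA fB (ofPath fB x) = ofPath fB (shiftSeq x) := by
  ext i
  by_cases h₁ : i = -1
  · rw [h₁, autMap_val_neg_one, state_ofPath, ofPath_val_of_neg fB _ (by norm_num), shiftSeq,
      neg_add_cancel]
  by_cases h₀ : i = 0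
  · rw [h₀, val_zero, state_autMap, state_ofPath, input_ofPath, ofPath_val_zero, shiftSeq,
      zero_add, ← hx]
  rw [autMap_val_of_ne fA fB _ h₁ h₀, ofPath_shiftSeq_val fB _ h₁ h₀]

theorem iterate_autMap_val_of_pos (u : Discontinuum A Q B) (n : ℕ) {i : ℤ} (hi : 0 < i) :
    ((autMap fA fB)^[n] u).1 i = u.1 (i + n) := by
  induction n generalizing i with
  | zero => simp
  | succ n ih =>
    rw [iterate_succ_apply', autMap_val_of_ne fA fB _ (by omega) hi.ne', ih (by omega)]
    push_cast
    ring_nf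

theorem iterate_autMap_val_of_neg (u : Discontinuum A Q B) {n : ℕ} {i : ℤ} (hi : i < 0)
    (hin : -n ≤ i) :
    ((autMap fA fB)^[n] u).1 i = .inr (.inr (fB ((autMap fA fB)^[(n + i).toNat] u).state)) := by
  induction n generalizing i with
  | zero => omega
  | succ n ih =>
    rw [iterate_succ_apply']
    by_cases h₁ : i = -1
    · rw [h₁, autMap_val_neg_one]
      congr 5
      omega
    · rw [autMap_val_of_ne fA fB _ h₁ hi.ne, ih (by omega) (by omega)]
      congr 5
      omega

noncomputable def traj (u : Discontinuum A Q B) (n : ℕ) : Q × A :=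
  (((autMap fA fB)^[n] u).state, ((autMap fA fB)^[n] u).input)

theorem isNextEdge_traj (u : Discontinuum A Q B) (n : ℕ) :
    IsNextEdge fA (traj fA fB u n) (traj fA fB u (n + 1)) := by
  simp only [IsNextEdge, traj, iterate_succ_apply', state_autMap]

theorem iterate_autMap_eqOn_ofPath_traj (u : Discontinuum A Q B) (n : ℕ) :
    EqOn ((autMap fA fB)^[n] u).1 (ofPath fB fun j => traj fA fB u (n + j).toNat).1
      (Ici (-n)) := by
  intro i hi
  rcases lt_trichotomy i 0 with h | rfl | h
  · rw [iterate_autMap_val_of_neg fA fB u h hi, ofPath_val_of_neg fB _ h, traj]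
  · rw [val_zero, ofPath_val_zero, add_zero, Int.toNat_natCast, traj]
  · rw [iterate_autMap_val_of_pos fA fB u n h, ofPath_val_of_pos fB _ h, traj, ← val_one,
      iterate_autMap_val_of_pos fA fB u _ one_pos, Int.toNat_of_nonneg (by omega)]
    rw [show (1 : ℤ) + (n + (i - 1)) = i + n by ring]

end Automaton

section LimitSet

open Discontinuum

variable {A Q B : Type*} (fA : Q × A → Q) (fB : Q → B)

def limitSet (u : Discontinuum A Q B) : Set (Discontinuum A Q B) :=
  (fun x : ℤ → recurrentValues (traj fA fB u) => ofPath fB (Subtype.val ∘ x)) ''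
    {x | IsBiWalk (IsNextEdge fA on Subtype.val) x}

theorem chaoticOn_limitSet [Finite Q] [Finite A] (u : Discontinuum A Q B) :
    ChaoticOn (autMap fA fB) (limitSet fA fB u) := by
  let _ : TopologicalSpace (Q × A) := ⊥
  have : DiscreteTopology (Q × A) := ⟨rfl⟩
  exact (chaoticOn_shiftSeq (transGen_on_recurrentValues (isNextEdge_traj fA fB u))).image
    (continuous_ofPath_comp fB Subtype.val).continuousOn
    fun x hx => (autMap_ofPath fA fB (x := Subtype.val ∘ x) (hx 0)).symm

theorem isClosed_limitSet [Finite Q] [Finite A] (u : Discontinuum A Q B) :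
    IsClosed (limitSet fA fB u) := by
  let _ : TopologicalSpace (Q × A) := ⊥
  have : DiscreteTopology (Q × A) := ⟨rfl⟩
  exact ((isClosed_setOf_isBiWalk _).isCompact.image
    (continuous_ofPath_comp fB Subtype.val)).isClosed

theorem image_autMap_limitSet (u : Discontinuum A Q B) :
    autMap fA fB '' limitSet fA fB u = limitSet fA fB u := by
  let φ := fun x : ℤ → recurrentValues (traj fA fB u) => ofPath fB (Subtype.val ∘ x)
  let Y := {x : ℤ → recurrentValues (traj fA fB u) | IsBiWalk (IsNextEdge fA on Subtype.val) x}
  calc autMap fA fB '' (φ '' Y) = φ '' (shiftSeq '' Y) := by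
        rw [image_image, image_image]
        exact image_congr fun x hx => autMap_ofPath fA fB (x := Subtype.val ∘ x) (hx 0)
    _ = φ '' Y := by rw [image_shiftSeq_setOf_isBiWalk]

theorem eventually_exists_mem_limitSet_eqOn [Finite Q] [Finite A] (u : Discontinuum A Q B)
    (N : ℕ) : ∀ᶠ n in atTop,
      ∃ v ∈ limitSet fA fB u, EqOn v.1 ((autMap fA fB)^[n] u).1 (Icc (-N : ℤ) N) := by
  obtain ⟨n₀, hn₀⟩ := eventually_atTop.1 (eventually_mem_recurrentValues (traj fA fB u))
  filter_upwards [eventually_ge_atTop (n₀ + N)] with n hn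
  -- from time `n₀` on the orbit only uses recurrent edges
  let z : ℤ → recurrentValues (traj fA fB u) := fun j =>
    ⟨traj fA fB u (n₀ + (n - n₀ + j).toNat), hn₀ _ (Nat.le_add_right _ _)⟩
  have hz : EqOn (Subtype.val ∘ z) (fun j => traj fA fB u (n + j).toNat) (Icc (-N : ℤ) N) :=
    fun j ⟨hj, _⟩ => congrArg (traj fA fB u) (by omega)
  have hpath : IsPathOn (IsNextEdge fA on Subtype.val) z (-N) N := by
    intro j hj _
    have h := isNextEdge_traj fA fB u (n₀ + (n - n₀ + j).toNat)
    rwa [show n₀ + (n - n₀ + j).toNat + 1 = n₀ + (n - n₀ + (j + 1)).toNat by omega] at h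
  obtain ⟨w, -, -, hw, -, hwz⟩ :=
    hpath.exists_periodic_isBiWalk_eqOn (transGen_on_recurrentValues (isNextEdge_traj fA fB u))
      (by omega)
  refine ⟨_, ⟨w, hw, rfl⟩, fun i hi => ?_⟩
  rw [iterate_autMap_eqOn_ofPath_traj fA fB u n (show -(n : ℤ) ≤ i by linarith [hi.1])]
  exact eqOn_ofPath fB (fun j hj => (congrArg Subtype.val (hwz hj)).trans (hz hj)) hi

theorem omegaSet_singleton_subset_limitSet [Finite Q] [Finite A] (u : Discontinuum A Q B) :
    omegaSet (autMap fA fB) {u} ⊆ limitSet fA fB u := by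
  intro v hv
  rw [← (isClosed_limitSet fA fB u).closure_eq, mem_closure_iff_nhds_basis (hasBasis_nhds v)]
  intro N _
  obtain ⟨n, hn⟩ := eventually_atTop.1 (eventually_exists_mem_limitSet_eqOn fA fB u N)
  obtain ⟨_, hw, hwv⟩ :=
    (mem_closure_iff_nhds_basis (hasBasis_nhds v)).1 (mem_iInter.1 hv n) N trivial
  simp only [mem_iUnion, image_singleton, mem_singleton_iff] at hw
  obtain ⟨m, hm, rfl⟩ := hw
  obtain ⟨s, hs, hsm⟩ := hn m hm.le
  exact ⟨s, hs, hsm.trans hwv⟩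

theorem omegaSet_insert_limitSet [Finite Q] [Finite A] (u : Discontinuum A Q B) :
    omegaSet (autMap fA fB) (insert u (limitSet fA fB u)) = limitSet fA fB u := by
  rw [omegaSet_insert_of_image_eq (image_autMap_limitSet fA fB u),
    (isClosed_limitSet fA fB u).closure_eq,
    union_eq_right.2 (omegaSet_singleton_subset_limitSet fA fB u)]

end LimitSet

theorem finiteAutomaton_hasChaoticLimits_general (A Q B : Type)
    [Fintype A] [Fintype Q]
    (fA : Q × A → Q) (fB : Q → B) :
    HasChaoticLimits (autMap fA fB) := fun u =>
  ⟨insert u (limitSet fA fB u), mem_insert u _,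
    (omegaSet_insert_limitSet fA fB u).symm ▸ chaoticOn_limitSet fA fB u⟩

/-- Every finite automaton has chaotic limits: every point of the discontinuum
belongs to a set whose ω-limit set is a chaotic dynamical system. -/
theorem finiteAutomaton_hasChaoticLimits (A Q B : Type)
    [Fintype A] [Fintype Q] [Fintype B] [Nonempty A] [Nonempty Q] [Nonempty B]
    (fA : Q × A → Q) (fB : Q → B) :
    HasChaoticLimits (autMap fA fB) :=
  finiteAutomaton_hasChaoticLimits_general A Q B fA fB
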